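/- arXiv:1402.1617 — 3 statements merged into one kernel-verified Lean document; each statement's English description precedes it below -/
import Mathlib

section
/- The capacity of the binary symmetric AGP channel with crossover probability p = 1/2 and delay set 𝒟 = {0,1} equals 1/2 bit per channel use. -/
/-!
With `p = 1/2` the states are uniform, so error probabilities are normalized counts.

Achievability: bit `j` of the message is sent at positions `2j` and `2j+1`, masked by the
side-information bit at `2j+1`. That bit is the state at `2j+1` under delay 0 and the state at
`2j` under delay 1, so the odd half of the output is the message under delay 0 and the even
half is the message under delay 1. Decoding the odd half whenever it is a codeword never errs
under delay 0; under delay 1 the odd half is uniform, so it is another codeword with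
probability at most `M / 2^(n/2)`.

Converse: if message `m` is decoded correctly under both delays for side information `a`,
the two outputs differ by `a - (a shifted by one, with a fresh state e appended)`, which
determines `a` once `e` is known. So the outcomes decoded correctly under both delays number
at most `2^n #(D - D) ≤ 2^n min (2^n) (#D ^ 2) ≤ 2^n 2^⌈n/2⌉ #D` for the decoding set `D` of
`m`; summing over `m` gives `M (1 - P₀ - P₁) ≤ 2^⌈n/2⌉`.
-/

open scoped BigOperators

namespace BSAGP9

/-- `p` is a probability mass function on the finite alphabet `α`. -/
def IsPMF {α : Type*} [Fintype α] (p : α → ℝ) : Prop :=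
  (∀ a, 0 ≤ p a) ∧ ∑ a, p a = 1

/-- The side-information sequence seen by the encoder: the state sequence `s`
delayed by `d`, completed by fresh i.i.d. states `z` outside of the range. -/
def sideInfo {𝒮 : Type*} (n : ℕ) (d : ℤ) (s z : Fin n → 𝒮) : Fin n → 𝒮 :=
  fun i =>
    if h : 0 ≤ (i : ℤ) - d ∧ (i : ℤ) - d < n then s ⟨((i : ℤ) - d).toNat, by omega⟩
    else z i

/-- A `(M, n)`-code for the asynchronous Gel'fand-Pinsker channel. -/
structure Code (𝒳 𝒮 𝒴 : Type*) (M n : ℕ) where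
  enc : Fin M → (Fin n → 𝒮) → Fin n → 𝒳
  dec : (Fin n → 𝒴) → Fin M

/-- Average probability of error of a code for delay `d`. -/
noncomputable def errProb {𝒳 𝒮 𝒴 : Type*} [Fintype 𝒳] [Fintype 𝒮] [Fintype 𝒴]
    (W : 𝒳 → 𝒮 → 𝒴 → ℝ) (PS : 𝒮 → ℝ) {M n : ℕ} (c : Code 𝒳 𝒮 𝒴 M n) (d : ℤ) : ℝ :=
  (M : ℝ)⁻¹ *
    ∑ m : Fin M, ∑ s : Fin n → 𝒮, ∑ z : Fin n → 𝒮, ∑ y : Fin n → 𝒴,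
      (∏ i, PS (s i)) * (∏ i, PS (z i)) *
        (∏ i, W (c.enc m (sideInfo n d s z) i) (s i) (y i)) *
        (if c.dec y ≠ m then (1 : ℝ) else 0)

/-- A rate `R` is achievable for the AGP channel with delay set `{-dmin, …, dmax}` if there
is a sequence of codes with at least `2^{nR}` messages whose error probability vanishes for
every delay in the delay set. -/
def Achievable {𝒳 𝒮 𝒴 : Type*} [Fintype 𝒳] [Fintype 𝒮] [Fintype 𝒴]
    (W : 𝒳 → 𝒮 → 𝒴 → ℝ) (PS : 𝒮 → ℝ) (dmin dmax : ℕ) (R : ℝ) : Prop :=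
  ∃ Msz : ℕ → ℕ, ∃ c : ∀ n, Code 𝒳 𝒮 𝒴 (Msz n) n,
    (∀ n : ℕ, (2 : ℝ) ^ ((n : ℝ) * R) ≤ (Msz n : ℝ)) ∧
    ∀ d : ℤ, -(dmin : ℤ) ≤ d → d ≤ (dmax : ℤ) →
      Filter.Tendsto (fun n => errProb W PS (c n) d) Filter.atTop (nhds 0)

/-- The binary symmetric AGP channel: deterministic output `Y = X ⊕ S`. -/
noncomputable def bscW : Bool → Bool → Bool → ℝ :=
  fun x s y => if y = xor x s then 1 else 0

/-- Bernoulli(`p`) pmf on `Bool`. -/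
noncomputable def bern (p : ℝ) : Bool → ℝ := fun b => if b then p else 1 - p

/-- Binary entropy function (in bits): `h₂(x) = −x log₂ x − (1−x) log₂ (1−x)`. -/
noncomputable def h2 (x : ℝ) : ℝ :=
  -(x * Real.logb 2 x) - (1 - x) * Real.logb 2 (1 - x)

open Finset Filter
open scoped Pointwise

section ErrorCount

variable {M n : ℕ}

/-- `bscW` is the indicator of `y = x + s`, where `+` is the exclusive or of the Boolean ring
`Bool`. -/
def output (c : Code Bool Bool Bool M n) (d : ℤ) (m : Fin M) (s z : Fin n → Bool) :
    Fin n → Bool :=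
  c.enc m (sideInfo n d s z) + s

def errCount (c : Code Bool Bool Bool M n) (d : ℤ) : ℕ :=
  ∑ m, #{sz : (Fin n → Bool) × (Fin n → Bool) | c.dec (output c d m sz.1 sz.2) ≠ m}

lemma prod_bern_half (s : Fin n → Bool) : ∏ i, bern (1 / 2) (s i) = (2 ^ n)⁻¹ := by
  have : ∀ b, bern (1 / 2) b = 2⁻¹ := by intro b; cases b <;> norm_num [bern]
  simp only [this, prod_const, card_univ, Fintype.card_fin, inv_pow]

lemma prod_bscW (x s y : Fin n → Bool) :
    ∏ i, bscW (x i) (s i) (y i) = if y = x + s then 1 else 0 := by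
  simp [bscW, Fintype.prod_boole, funext_iff, Bool.add_eq_xor]

theorem errProb_eq (c : Code Bool Bool Bool M n) (d : ℤ) :
    errProb bscW (bern (1 / 2)) c d = errCount c d / (M * 4 ^ n) := by
  have hy : ∀ m s z, ∑ y : Fin n → Bool, (∏ i, bern (1 / 2) (s i)) * (∏ i, bern (1 / 2) (z i)) *
      (∏ i, bscW (c.enc m (sideInfo n d s z) i) (s i) (y i)) * (if c.dec y ≠ m then (1 : ℝ) else 0)
      = (4 ^ n)⁻¹ * if c.dec (output c d m s z) ≠ m then 1 else 0 := by
    intro m s z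
    simp only [prod_bern_half, prod_bscW]
    rw [Fintype.sum_eq_single (output c d m s z) fun y hy => by
      simp [show y ≠ c.enc m (sideInfo n d s z) + s from hy]]
    simp only [output, if_true]
    rw [← inv_pow, ← inv_pow, ← mul_pow]
    norm_num
  simp only [errProb, errCount, hy, ← mul_sum, card_filter, Fintype.sum_prod_type]
  push_cast
  rw [div_eq_inv_mul, mul_inv]
  ring

lemma errProb_nonneg (c : Code Bool Bool Bool M n) (d : ℤ) :
    0 ≤ errProb bscW (bern (1 / 2)) c d := by
  rw [errProb_eq]
  positivity

end ErrorCount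

section SideInfo

variable {α : Type*}

@[simp]
lemma sideInfo_zero {n : ℕ} (s z : Fin n → α) : sideInfo n 0 s z = s := by
  funext i
  simp [sideInfo]

lemma sideInfo_one_apply_succ {n : ℕ} (s z : Fin n → α) (i : ℕ) (h : i + 1 < n) :
    sideInfo n 1 s z ⟨i + 1, h⟩ = s ⟨i, by omega⟩ := by
  simp only [sideInfo, Nat.cast_add, Nat.cast_one, add_sub_cancel_right]
  rw [dif_pos (by omega)]
  rfl

lemma sideInfo_one {N : ℕ} (s z : Fin (N + 1) → α) :
    sideInfo (N + 1) 1 s z = Fin.cons (z 0) (Fin.init s) := by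
  funext i
  cases i using Fin.cases with
  | zero => simp [sideInfo]
  | succ i => exact sideInfo_one_apply_succ s z i (by omega)

def delayOneEquiv (α : Type*) (N : ℕ) :
    (Fin (N + 1) → α) × (Fin (N + 1) → α) ≃ (Fin (N + 1) → α) × (Fin (N + 1) → α) where
  toFun sz := (Fin.snoc (Fin.tail sz.1) (sz.2 0), Fin.cons (sz.1 0) (Fin.tail sz.2))
  invFun sz := (Fin.cons (sz.2 0) (Fin.init sz.1), Fin.cons (sz.1 (Fin.last N)) (Fin.tail sz.2))
  left_inv sz := by simp
  right_inv sz := by simp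

lemma sideInfo_delayOneEquiv {N : ℕ} (sz : (Fin (N + 1) → α) × (Fin (N + 1) → α)) :
    sideInfo (N + 1) 1 (delayOneEquiv α N sz).1 (delayOneEquiv α N sz).2 = sz.1 := by
  simp [delayOneEquiv, sideInfo_one]

end SideInfo

section Converse

lemma sub_snoc_tail_injective {α : Type*} [AddGroup α] {N : ℕ} (e : α) :
    Function.Injective fun a : Fin (N + 1) → α => a - Fin.snoc (Fin.tail a) e := by
  intro a b h
  have hd := congrFun h
  funext i
  induction i using Fin.reverseInduction with
  | last => simpa using hd (Fin.last N)
  | cast i ih =>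
    have := hd i.castSucc
    simp only [Pi.sub_apply, Fin.snoc_castSucc, Fin.tail, ih] at this
    exact sub_left_injective this

lemma min_two_pow_mul_self_le (n D : ℕ) : min (2 ^ n) (D * D) ≤ 2 ^ ((n + 1) / 2) * D := by
  rcases le_total D (2 ^ ((n + 1) / 2)) with hD | hD
  · exact (min_le_right _ _).trans (Nat.mul_le_mul_right D hD)
  · calc min (2 ^ n) (D * D) ≤ 2 ^ ((n + 1) / 2) * 2 ^ (n / 2) := by
          rw [← pow_add, show (n + 1) / 2 + n / 2 = n by omega]
          exact min_le_left _ _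
      _ ≤ 2 ^ ((n + 1) / 2) * D :=
          Nat.mul_le_mul_left _ ((Nat.pow_le_pow_right two_pos (by omega)).trans hD)

lemma card_le_card_filter_and_add {β : Type*} [Fintype β] (P Q : β → Prop) [DecidablePred P]
    [DecidablePred Q] : Fintype.card β ≤ #{x | P x ∧ Q x} + #{x | ¬P x} + #{x | ¬Q x} := by
  classical
  calc Fintype.card β = #(univ : Finset β) := rfl
    _ ≤ #(({x | P x ∧ Q x} : Finset β) ∪ ({x | ¬P x} : Finset β) ∪ ({x | ¬Q x} : Finset β)) :=
        card_le_card fun x _ => by by_cases P x <;> by_cases Q x <;> simp_all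
    _ ≤ _ := (card_union_le _ _).trans (by gcongr; exact card_union_le _ _)

variable {M N : ℕ} (c : Code Bool Bool Bool M (N + 1))

/-- The two outputs differ by `a - Fin.snoc (Fin.tail a) e`, which determines the side
information `a`. -/
lemma card_decoded_twice_le (m : Fin M) :
    #{sz : (Fin (N + 1) → Bool) × (Fin (N + 1) → Bool) | c.dec (c.enc m sz.1 + sz.1) = m ∧
        c.dec (c.enc m sz.1 + Fin.snoc (Fin.tail sz.1) (sz.2 0)) = m}
      ≤ 2 ^ ((N + 2) / 2) * #{y | c.dec y = m} * 2 ^ (N + 1) := by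
  set D : Finset (Fin (N + 1) → Bool) := {y | c.dec y = m}
  calc _ ≤ #((D - D) ×ˢ (univ : Finset (Fin (N + 1) → Bool))) := by
        refine card_le_card_of_injOn
          (fun sz => (sz.1 - Fin.snoc (Fin.tail sz.1) (sz.2 0), sz.2)) (fun sz hsz => ?_) ?_
        · rw [mem_coe, mem_filter] at hsz
          exact mem_product.2 ⟨mem_sub.2 ⟨_, by simpa [D] using hsz.2.1, _,
            by simpa [D] using hsz.2.2, add_sub_add_left_eq_sub _ _ _⟩, mem_univ _⟩
        · intro sz _ sz' _ h
          simp only [Prod.mk.injEq] at h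
          obtain ⟨h1, h2⟩ := h
          rw [h2] at h1
          exact Prod.ext (sub_snoc_tail_injective _ h1) h2
    _ ≤ min (2 ^ (N + 1)) (#D * #D) * 2 ^ (N + 1) := by
        rw [card_product, card_univ, Fintype.card_fun, Fintype.card_bool, Fintype.card_fin]
        gcongr
        exact le_min ((card_le_univ _).trans_eq (by simp)) card_sub_le
    _ ≤ 2 ^ ((N + 2) / 2) * #D * 2 ^ (N + 1) := by
        gcongr
        exact min_two_pow_mul_self_le (N + 1) #D

lemma card_output_one_ne (m : Fin M) :
    #{sz : (Fin (N + 1) → Bool) × (Fin (N + 1) → Bool) | c.dec (output c 1 m sz.1 sz.2) ≠ m}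
      = #{sz : (Fin (N + 1) → Bool) × (Fin (N + 1) → Bool) |
          c.dec (c.enc m sz.1 + Fin.snoc (Fin.tail sz.1) (sz.2 0)) ≠ m} := by
  refine (card_equiv (delayOneEquiv Bool N) fun sz => ?_).symm
  rw [mem_filter, mem_filter]
  simp only [mem_univ, true_and, output, sideInfo_delayOneEquiv]
  rfl

theorem card_mul_four_pow_le :
    M * 4 ^ (N + 1) ≤ 2 ^ ((N + 2) / 2) * 4 ^ (N + 1) + errCount c 0 + errCount c 1 := by
  have hm : ∀ m : Fin M, 4 ^ (N + 1) ≤ 2 ^ ((N + 2) / 2) * #{y | c.dec y = m} * 2 ^ (N + 1) +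
      #{sz : (Fin (N + 1) → Bool) × (Fin (N + 1) → Bool) | c.dec (output c 0 m sz.1 sz.2) ≠ m} +
      #{sz : (Fin (N + 1) → Bool) × (Fin (N + 1) → Bool) | c.dec (output c 1 m sz.1 sz.2) ≠ m} := by
    intro m
    rw [card_output_one_ne]
    simp only [output, sideInfo_zero, ne_eq]
    calc 4 ^ (N + 1) = Fintype.card ((Fin (N + 1) → Bool) × (Fin (N + 1) → Bool)) := by
          simp [← mul_pow]
      _ ≤ _ := card_le_card_filter_and_add _ _
      _ ≤ _ := by gcongr; exact card_decoded_twice_le c m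
  have hD : ∑ m : Fin M, #{y : Fin (N + 1) → Bool | c.dec y = m} = 2 ^ (N + 1) := by
    rw [← card_eq_sum_card_fiberwise fun _ _ => mem_univ _]
    simp
  calc M * 4 ^ (N + 1) = ∑ _m : Fin M, 4 ^ (N + 1) := by simp
    _ ≤ _ := sum_le_sum fun m _ => hm m
    _ = _ := by
        simp only [sum_add_distrib, ← sum_mul, ← mul_sum, hD, errCount]
        rw [show (4 : ℕ) ^ (N + 1) = 2 ^ (N + 1) * 2 ^ (N + 1) by rw [← mul_pow]; norm_num]
        ring

theorem mul_one_sub_errProb_le :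
    (M : ℝ) * (1 - errProb bscW (bern (1 / 2)) c 0 - errProb bscW (bern (1 / 2)) c 1)
      ≤ 2 ^ ((N + 2) / 2) := by
  rcases M.eq_zero_or_pos with rfl | hM
  · simp
  have hcount : (M * 4 ^ (N + 1) : ℝ) ≤
      2 ^ ((N + 2) / 2) * 4 ^ (N + 1) + errCount c 0 + errCount c 1 := by
    exact_mod_cast card_mul_four_pow_le c
  rw [errProb_eq, errProb_eq]
  field_simp
  linarith

end Converse

theorem card_filter_mem_mul_card_eq {X G : Type*} [AddGroup X] [AddGroup G] [Fintype X]
    [Fintype G] [DecidableEq G] (F : X → G) (φ : G → X) (hF : ∀ x g, F (x + φ g) = F x + g)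
    (T : Finset G) : #{x | F x ∈ T} * Fintype.card G = #T * Fintype.card X := by
  have hfiber : ∀ t, #{x | F x = t} = #{x | F x = 0} := fun t =>
    card_equiv (Equiv.addRight (φ (-t))) fun x => by simp [hF, add_neg_eq_zero]
  have hT : #{x | F x ∈ T} = #T * #{x | F x = 0} := by
    rw [card_eq_sum_card_fiberwise (s := {x | F x ∈ T}) (t := T) fun x hx => (mem_filter.1 hx).2,
      ← smul_eq_mul, ← sum_const]
    refine sum_congr rfl fun t ht => ?_
    rw [filter_filter, ← hfiber t]
    congr 1
    ext x
    simp only [mem_filter, mem_univ, true_and, and_iff_right_iff_imp]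
    rintro rfl
    exact ht
  have hX : Fintype.card X = Fintype.card G * #{x | F x = 0} := by
    rw [← card_univ, card_eq_sum_card_fiberwise (f := F) (t := univ) fun _ _ => mem_univ _]
    simp [hfiber]
  rw [hT, hX]
  ring

section PairCode

variable {n M : ℕ}

def evenIdx (j : Fin (n / 2)) : Fin n := ⟨2 * j, by omega⟩

def oddIdx (j : Fin (n / 2)) : Fin n := ⟨2 * j + 1, by omega⟩

lemma oddIdx_injective : Function.Injective (oddIdx (n := n)) := fun j j' h => by
  simp only [oddIdx, Fin.mk.injEq] at h
  omega

lemma evenIdx_ne_oddIdx (j j' : Fin (n / 2)) : evenIdx j ≠ oddIdx j' := fun h => by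
  simp only [evenIdx, oddIdx, Fin.mk.injEq] at h
  omega

noncomputable def pairCode [NeZero M] (ι : Fin M → Fin (n / 2) → Bool) :
    Code Bool Bool Bool M n where
  enc m a i := if h : (i : ℕ) / 2 < n / 2 then ι m ⟨i / 2, h⟩ + a (oddIdx ⟨i / 2, h⟩) else 0
  dec y := if ∃ m, ι m = y ∘ oddIdx then Function.invFun ι (y ∘ oddIdx)
    else Function.invFun ι (y ∘ evenIdx)

variable [NeZero M] (ι : Fin M → Fin (n / 2) → Bool)

lemma pairCode_enc_evenIdx (m : Fin M) (a : Fin n → Bool) (j : Fin (n / 2)) :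
    (pairCode ι).enc m a (evenIdx j) = ι m j + a (oddIdx j) := by
  have h : 2 * (j : ℕ) / 2 = j := by omega
  simp [pairCode, evenIdx, h]

lemma pairCode_enc_oddIdx (m : Fin M) (a : Fin n → Bool) (j : Fin (n / 2)) :
    (pairCode ι).enc m a (oddIdx j) = ι m j + a (oddIdx j) := by
  have h : (2 * (j : ℕ) + 1) / 2 = j := by omega
  simp [pairCode, oddIdx, h]

lemma sideInfo_one_oddIdx (s z : Fin n → Bool) (j : Fin (n / 2)) :
    sideInfo n 1 s z (oddIdx j) = s (evenIdx j) :=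
  sideInfo_one_apply_succ s z (2 * j) _

lemma output_pairCode_zero_comp_oddIdx (m : Fin M) (s z : Fin n → Bool) :
    output (pairCode ι) 0 m s z ∘ oddIdx = ι m := by
  funext j
  simp [output, pairCode_enc_oddIdx, add_assoc, BooleanRing.add_self]

lemma output_pairCode_one_comp_evenIdx (m : Fin M) (s z : Fin n → Bool) :
    output (pairCode ι) 1 m s z ∘ evenIdx = ι m := by
  funext j
  simp [output, pairCode_enc_evenIdx, sideInfo_one_oddIdx, add_assoc, BooleanRing.add_self]

lemma output_pairCode_one_comp_oddIdx (m : Fin M) (s z : Fin n → Bool) :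
    output (pairCode ι) 1 m s z ∘ oddIdx = ι m + s ∘ evenIdx + s ∘ oddIdx := by
  funext j
  simp [output, pairCode_enc_oddIdx, sideInfo_one_oddIdx]

variable {ι}

lemma pairCode_dec_eq_of_comp_oddIdx (hι : Function.Injective ι) {y : Fin n → Bool} {m : Fin M}
    (h : y ∘ oddIdx = ι m) : (pairCode ι).dec y = m := by
  change (if _ then _ else _) = m
  rw [if_pos ⟨m, h.symm⟩, h]
  exact Function.leftInverse_invFun hι m

lemma comp_oddIdx_mem_of_pairCode_dec_ne (hι : Function.Injective ι) {y : Fin n → Bool}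
    {m : Fin M} (h : y ∘ evenIdx = ι m) (hne : (pairCode ι).dec y ≠ m) :
    y ∘ oddIdx ∈ (univ.image ι).erase (ι m) := by
  change (if _ then _ else _) ≠ m at hne
  split_ifs at hne with hodd
  · obtain ⟨m', hm'⟩ := hodd
    refine mem_erase.2 ⟨fun h' => hne ?_, mem_image.2 ⟨m', mem_univ _, hm'⟩⟩
    rw [h']
    exact Function.leftInverse_invFun hι m
  · rw [h, Function.leftInverse_invFun hι m] at hne
    exact absurd rfl hne

lemma errCount_pairCode_zero (hι : Function.Injective ι) : errCount (pairCode ι) 0 = 0 := by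
  have h : ∀ m s z, (pairCode ι).dec (output (pairCode ι) 0 m s z) = m := fun m s z =>
    pairCode_dec_eq_of_comp_oddIdx hι (output_pairCode_zero_comp_oddIdx ι m s z)
  simp [errCount, h]

/-- Translating `s` along the odd positions translates the odd half of the delay-1 output,
which is therefore uniformly distributed. -/
lemma errCount_pairCode_one_mul_le (hι : Function.Injective ι) :
    errCount (pairCode ι) 1 * 2 ^ (n / 2) ≤ M * M * 4 ^ n := by
  have hm : ∀ m : Fin M, #{sz : (Fin n → Bool) × (Fin n → Bool) |
      (pairCode ι).dec (output (pairCode ι) 1 m sz.1 sz.2) ≠ m} * 2 ^ (n / 2) ≤ M * 4 ^ n := by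
    intro m
    set T := (univ.image ι).erase (ι m)
    set F := fun sz : (Fin n → Bool) × (Fin n → Bool) => ι m + sz.1 ∘ evenIdx + sz.1 ∘ oddIdx
    have hF : ∀ sz g, F (sz + (Function.extend oddIdx g 0, 0)) = F sz + g := by
      intro sz g
      ext j
      simp only [F, Prod.fst_add, Pi.add_apply, Function.comp_apply,
        oddIdx_injective.extend_apply,
        Function.extend_apply' _ _ _ fun ⟨j', h⟩ => evenIdx_ne_oddIdx j j' h.symm,
        Pi.zero_apply, add_zero]
      abel
    calc _ ≤ #{sz | F sz ∈ T} * 2 ^ (n / 2) := by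
          gcongr with sz _
          intro hsz
          change ι m + sz.1 ∘ evenIdx + sz.1 ∘ oddIdx ∈ T
          rw [← output_pairCode_one_comp_oddIdx ι m sz.1 sz.2]
          exact comp_oddIdx_mem_of_pairCode_dec_ne hι (output_pairCode_one_comp_evenIdx ι m _ _) hsz
      _ = #T * 4 ^ n := by
          convert card_filter_mem_mul_card_eq F _ hF T using 2
          · simp
          · simp [← mul_pow]
      _ ≤ M * 4 ^ n := by
          gcongr
          exact (card_erase_le.trans card_image_le).trans_eq (by simp)
  calc errCount (pairCode ι) 1 * 2 ^ (n / 2)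
        = ∑ m : Fin M, #{sz : (Fin n → Bool) × (Fin n → Bool) |
          (pairCode ι).dec (output (pairCode ι) 1 m sz.1 sz.2) ≠ m} * 2 ^ (n / 2) :=
        sum_mul _ _ _
    _ ≤ ∑ _m : Fin M, M * 4 ^ n := sum_le_sum fun m _ => hm m
    _ = M * M * 4 ^ n := by simp [mul_assoc]

theorem errProb_pairCode_zero (hι : Function.Injective ι) :
    errProb bscW (bern (1 / 2)) (pairCode ι) 0 = 0 := by
  rw [errProb_eq, errCount_pairCode_zero hι, Nat.cast_zero, zero_div]

theorem errProb_pairCode_one_le (hι : Function.Injective ι) :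
    errProb bscW (bern (1 / 2)) (pairCode ι) 1 ≤ M / 2 ^ (n / 2) := by
  have hM : (0 : ℝ) < M := by exact_mod_cast NeZero.pos M
  rw [errProb_eq, div_le_div_iff₀ (by positivity) (by positivity)]
  calc (errCount (pairCode ι) 1 : ℝ) * 2 ^ (n / 2) ≤ M * M * 4 ^ n := by
        exact_mod_cast errCount_pairCode_one_mul_le hι
    _ = M * (M * 4 ^ n) := by ring

end PairCode

section Rates

def binaryDigits (a k : ℕ) (m : Fin (2 ^ a)) : Fin k → Bool := fun j => (m : ℕ).testBit j

lemma binaryDigits_injective {a k : ℕ} (h : a ≤ k) : Function.Injective (binaryDigits a k) := by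
  intro m m' hm
  refine Fin.ext (Nat.eq_of_testBit_eq fun j => ?_)
  by_cases hj : j < k
  · exact congrFun hm ⟨j, hj⟩
  · have h2 : 2 ^ a ≤ 2 ^ j := Nat.pow_le_pow_right two_pos (by omega)
    rw [Nat.testBit_lt_two_pow (m.2.trans_le h2), Nat.testBit_lt_two_pow (m'.2.trans_le h2)]

lemma le_of_eventually_mul_le_mul_add {R a C : ℝ} (h : ∀ᶠ n : ℕ in atTop, n * R ≤ n * a + C) :
    R ≤ a := by
  by_contra! hlt
  have : Tendsto (fun n : ℕ => (n : ℝ) * (R - a)) atTop atTop :=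
    tendsto_natCast_atTop_atTop.atTop_mul_const (sub_pos.2 hlt)
  obtain ⟨n, hn, hC⟩ := (h.and (this.eventually_gt_atTop C)).exists
  linarith

theorem le_half_of_achievable {R : ℝ} (h : Achievable bscW (bern (1 / 2)) 0 1 R) : R ≤ 1 / 2 := by
  obtain ⟨Msz, c, hM, herr⟩ := h
  have hsmall : ∀ᶠ n in atTop,
      errProb bscW (bern (1 / 2)) (c n) 0 + errProb bscW (bern (1 / 2)) (c n) 1 < 1 / 2 := by
    have := (herr 0 (by norm_num) (by norm_num)).add (herr 1 (by norm_num) (by norm_num))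
    rw [add_zero] at this
    exact this.eventually (gt_mem_nhds (by norm_num))
  refine le_of_eventually_mul_le_mul_add (C := 3 / 2) ?_
  filter_upwards [hsmall, eventually_ge_atTop 1] with n hn h1
  obtain ⟨N, rfl⟩ := Nat.exists_eq_add_of_le' h1
  have hbound := mul_one_sub_errProb_le (c (N + 1))
  have hexp : (2 : ℝ) ^ ((N + 1 : ℕ) * R) ≤ (2 : ℝ) ^ (((N + 2) / 2 + 1 : ℕ) : ℝ) := by
    rw [Real.rpow_natCast, pow_succ]
    nlinarith [hM (N + 1), mul_nonneg (Nat.cast_nonneg (α := ℝ) (Msz (N + 1)))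
      (by linarith : (0 : ℝ) ≤ 1 / 2 - errProb bscW (bern (1 / 2)) (c (N + 1)) 0
        - errProb bscW (bern (1 / 2)) (c (N + 1)) 1)]
  rw [Real.rpow_le_rpow_left_iff one_lt_two] at hexp
  have hdiv : (((N + 2) / 2 : ℕ) : ℝ) ≤ (N + 2 : ℕ) / 2 := Nat.cast_div_le
  push_cast at hexp hdiv ⊢
  linarith

theorem achievable_of_lt_half {R : ℝ} (hR0 : 0 ≤ R) (hR : R < 1 / 2) :
    Achievable bscW (bern (1 / 2)) 0 1 R := by
  set a : ℕ → ℕ := fun n => ⌈n * R⌉₊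
  have hgap : ∀ n : ℕ, (a n : ℝ) - (n / 2 : ℕ) ≤ n * (R - 1 / 2) + 3 / 2 := by
    intro n
    have h1 : (a n : ℝ) < n * R + 1 := Nat.ceil_lt_add_one (by positivity)
    have h2 : (n : ℝ) ≤ 2 * (n / 2 : ℕ) + 1 := by exact_mod_cast (by omega : n ≤ 2 * (n / 2) + 1)
    linarith
  have hgap_lim : Tendsto (fun n : ℕ => (n : ℝ) * (R - 1 / 2) + 3 / 2) atTop atBot :=
    tendsto_atBot_add_const_right _ _
      (tendsto_natCast_atTop_atTop.atTop_mul_const_of_neg (by linarith))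
  have hle : ∀ᶠ n in atTop, a n ≤ n / 2 := by
    filter_upwards [hgap_lim.eventually_le_atBot 0] with n hn
    have : (a n : ℝ) ≤ (n / 2 : ℕ) := by linarith [hgap n]
    exact_mod_cast this
  refine ⟨fun n => 2 ^ a n, fun n => pairCode (binaryDigits (a n) (n / 2)), fun n => ?_,
    fun d hd0 hd1 => ?_⟩
  · rw [Nat.cast_pow, Nat.cast_ofNat, ← Real.rpow_natCast]
    exact Real.rpow_le_rpow_of_exponent_le one_le_two (Nat.le_ceil _)
  obtain rfl | rfl : d = 0 ∨ d = 1 := by omega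
  · refine tendsto_const_nhds.congr' ?_
    filter_upwards [hle] with n hn
    exact (errProb_pairCode_zero (binaryDigits_injective hn)).symm
  · refine squeeze_zero' (Eventually.of_forall fun n => errProb_nonneg _ _) ?_
      ((tendsto_rpow_atBot_of_base_gt_one 2 one_lt_two).comp hgap_lim)
    filter_upwards [hle] with n hn
    refine (errProb_pairCode_one_le (binaryDigits_injective hn)).trans ?_
    rw [Nat.cast_pow, Nat.cast_ofNat, ← Real.rpow_natCast, ← Real.rpow_natCast,
      ← Real.rpow_sub two_pos]
    exact Real.rpow_le_rpow_of_exponent_le one_le_two (hgap n)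

end Rates

/-- The capacity of the binary symmetric AGP channel with crossover probability `1/2`
and delay set `𝒟 = {0,1}` equals `1/2` bit per channel use. -/
theorem bsagp_half_capacity :
    sSup {R : ℝ | Achievable bscW (bern (1 / 2)) 0 1 R} = 1 / 2 := by
  refine csSup_eq_of_forall_le_of_forall_lt_exists_gt
    ⟨0, achievable_of_lt_half le_rfl (by norm_num)⟩ (fun R hR => le_half_of_achievable hR)
    fun w hw => ⟨(max w 0 + 1 / 2) / 2, achievable_of_lt_half (by positivity) ?_, ?_⟩ <;>
  linarith [le_max_left w 0, max_lt hw (by norm_num : (0 : ℝ) < 1 / 2)]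

end BSAGP9
end

section
/- Fix d ≥ 1 and n ≥ 1, and let S_{1−d}, S_{2−d}, …, S_n be i.i.d. Bool-valued random variables with P(S_j = true) = 1/2. Define K_i = S_i ⊕ S_{i−d} for i = 1,…,n. Then K_1, …, K_n are mutually independent and each K_i satisfies P(K_i = true) = 1/2; i.e., the sequence (K_1,…,K_n) is i.i.d. Bernoulli(1/2). -/
open MeasureTheory ProbabilityTheory

/-- `K_i = S_{i+d} ⊕ S_i` (0-indexed; corresponding to `K_i = S_i ⊕ S_{i−d}` for the
1-indexed family `S_{1−d},…,S_n`). -/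
def Kseq {Ω : Type*} (d n : ℕ) (S : Fin (n + d) → Ω → Bool) (i : Fin n) (ω : Ω) : Bool :=
  xor (S ⟨(i : ℕ) + d, by have := i.isLt; omega⟩ ω) (S ⟨(i : ℕ), by have := i.isLt; omega⟩ ω)

/-!
Write `x ↦ (seed, K)` for the map sending a Boolean vector `x_{1−d}, …, x_n` to its first `d`
coordinates and its lagged XORs `K_i = x_i ⊕ x_{i−d}`. It is injective, since from the seed
one recovers `x_i = K_i ⊕ x_{i−d}` inductively, hence a bijection between sets of size
`2^(n+d)`. So it carries the uniform law of `S` to the uniform law on seeds × `{0,1}^n`,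
whose second marginal, the law of `K`, is uniform on `{0,1}^n`: the product of
Bernoulli(1/2) laws.
-/

theorem map_fun_eq_pi_iff_iIndepFun_and_map_eq {Ω ι : Type*} [MeasurableSpace Ω]
    {μ : Measure Ω} [IsProbabilityMeasure μ] [Fintype ι] {β : ι → Type*}
    [∀ i, MeasurableSpace (β i)] {X : ∀ i, Ω → β i} {ν : ∀ i, Measure (β i)}
    [∀ i, IsProbabilityMeasure (ν i)] (hX : ∀ i, AEMeasurable (X i) μ) :
    μ.map (fun ω i ↦ X i ω) = Measure.pi ν ↔ iIndepFun X μ ∧ ∀ i, μ.map (X i) = ν i := by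
  rw [iIndepFun_iff_map_fun_eq_pi_map hX]
  constructor
  · intro h
    have hmarg : ∀ i, μ.map (X i) = ν i := fun i ↦ by
      rw [← (measurePreserving_eval ν i).map_eq, ← h,
        AEMeasurable.map_map_of_aemeasurable (measurable_pi_apply i).aemeasurable
          (aemeasurable_pi_lambda _ hX)]
      rfl
    exact ⟨by simp only [h, hmarg], hmarg⟩
  · rintro ⟨h, hmarg⟩
    rw [h, funext hmarg]

noncomputable abbrev uniformBool : Measure Bool := (PMF.uniformOfFintype Bool).toMeasure

theorem uniformBool_singleton (b : Bool) : uniformBool {b} = 2⁻¹ := by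
  simp

theorem map_eq_uniformBool_iff {Ω : Type*} [MeasurableSpace Ω] {μ : Measure Ω}
    [IsProbabilityMeasure μ] {X : Ω → Bool} (hX : Measurable X) :
    μ.map X = uniformBool ↔ μ {ω | X ω = true} = 1 / 2 := by
  have hfalse : μ (X ⁻¹' {false}) = 1 - μ {ω | X ω = true} := by
    rw [← prob_compl_eq_one_sub (s := {ω | X ω = true}) (hX (measurableSet_singleton true))]
    congr 1
    ext ω
    simp
  rw [Measure.ext_iff_singleton]
  simp only [Measure.map_apply hX (measurableSet_singleton _), uniformBool_singleton,
    Bool.forall_bool, hfalse, one_div]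
  exact ⟨fun h ↦ h.2, fun h ↦ ⟨by rw [h, ENNReal.one_sub_inv_two], h⟩⟩

def lagXor (d n : ℕ) (x : Fin (n + d) → Bool) (i : Fin n) : Bool :=
  Kseq d n (fun j y ↦ y j) i x

def seedLagXor (d n : ℕ) (x : Fin (n + d) → Bool) : (Fin d → Bool) × (Fin n → Bool) :=
  (fun j ↦ x (Fin.castLE (Nat.le_add_left d n) j), lagXor d n x)

theorem seedLagXor_injective {d : ℕ} (hd : 1 ≤ d) (n : ℕ) :
    Function.Injective (seedLagXor d n) := by
  intro x y hxy
  simp only [seedLagXor, Prod.mk.injEq, funext_iff] at hxy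
  obtain ⟨hseed, hlag⟩ := hxy
  ext ⟨j, hj⟩
  induction j using Nat.strong_induction_on with
  | _ j ih =>
    by_cases hjd : j < d
    · exact hseed ⟨j, hjd⟩
    · obtain ⟨i, rfl⟩ : ∃ i, j = i + d := ⟨j - d, by omega⟩
      have hi : i < n := by omega
      have := hlag ⟨i, hi⟩
      simp only [lagXor, Kseq, ih i (by omega) (by omega)] at this
      exact (Bool.xor_left_inj).mp this

theorem seedLagXor_bijective {d : ℕ} (hd : 1 ≤ d) (n : ℕ) :
    Function.Bijective (seedLagXor d n) :=
  (Fintype.bijective_iff_injective_and_card _).mpr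
    ⟨seedLagXor_injective hd n, by simp [Fintype.card_prod, pow_add, mul_comm]⟩

theorem map_pi_uniformBool_seedLagXor {d : ℕ} (hd : 1 ≤ d) (n : ℕ) :
    (Measure.pi fun _ ↦ uniformBool).map (seedLagXor d n) =
      (Measure.pi fun _ ↦ uniformBool).prod (Measure.pi fun _ ↦ uniformBool) := by
  refine Measure.ext_of_singleton fun p ↦ ?_
  obtain ⟨x, rfl⟩ := (seedLagXor_bijective hd n).2 p
  rw [Measure.map_apply (measurable_of_finite _) (measurableSet_singleton _),
    ← Set.image_singleton, (seedLagXor_injective hd n).preimage_image, Set.image_singleton,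
    seedLagXor, ← Set.singleton_prod_singleton, Measure.prod_prod]
  simp [pow_add, mul_comm]

theorem map_pi_uniformBool_lagXor {d : ℕ} (hd : 1 ≤ d) (n : ℕ) :
    (Measure.pi fun _ ↦ uniformBool).map (lagXor d n) = Measure.pi fun _ ↦ uniformBool := by
  calc (Measure.pi fun _ ↦ uniformBool).map (lagXor d n)
      = ((Measure.pi fun _ ↦ uniformBool).map (seedLagXor d n)).map Prod.snd := by
        rw [Measure.map_map measurable_snd (measurable_of_finite _)]; rfl
    _ = Measure.pi fun _ ↦ uniformBool := by simp [map_pi_uniformBool_seedLagXor hd]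

theorem xor_lags_iid_bernoulli_half_general {Ω : Type*} [MeasurableSpace Ω]
    (μ : Measure Ω) [IsProbabilityMeasure μ]
    (d n : ℕ) (hd : 1 ≤ d)
    (S : Fin (n + d) → Ω → Bool) (hmeas : ∀ j, Measurable (S j))
    (hind : iIndepFun S μ)
    (hp : ∀ j, μ {ω | S j ω = true} = 1 / 2) :
    iIndepFun (Kseq d n S) μ ∧
      ∀ i : Fin n, μ {ω | Kseq d n S i ω = true} = 1 / 2 := by
  have hS : Measurable fun ω j ↦ S j ω := measurable_pi_lambda _ hmeas
  have hK : ∀ i, Measurable (Kseq d n S i) := fun i ↦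
    (measurable_pi_apply i).comp ((measurable_of_finite (lagXor d n)).comp hS)
  have lawS : μ.map (fun ω j ↦ S j ω) = Measure.pi fun _ ↦ uniformBool :=
    (map_fun_eq_pi_iff_iIndepFun_and_map_eq fun j ↦ (hmeas j).aemeasurable).mpr
      ⟨hind, fun j ↦ (map_eq_uniformBool_iff (hmeas j)).mpr (hp j)⟩
  have lawK : μ.map (fun ω i ↦ Kseq d n S i ω) = Measure.pi fun _ ↦ uniformBool := by
    rw [show (fun ω i ↦ Kseq d n S i ω) = lagXor d n ∘ fun ω j ↦ S j ω from rfl,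
      ← Measure.map_map (measurable_of_finite _) hS, lawS, map_pi_uniformBool_lagXor hd]
  obtain ⟨hindK, hmargK⟩ :=
    (map_fun_eq_pi_iff_iIndepFun_and_map_eq fun i ↦ (hK i).aemeasurable).mp lawK
  exact ⟨hindK, fun i ↦ (map_eq_uniformBool_iff (hK i)).mp (hmargK i)⟩

/-- If `S_{1−d},…,S_n` are i.i.d. Bernoulli(1/2) and `K_i = S_i ⊕ S_{i−d}` for
`i = 1,…,n`, then `K_1,…,K_n` are i.i.d. Bernoulli(1/2). -/
theorem xor_lags_iid_bernoulli_half {Ω : Type*} [MeasurableSpace Ω]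
    (μ : Measure Ω) [IsProbabilityMeasure μ]
    (d n : ℕ) (hd : 1 ≤ d) (hn : 1 ≤ n)
    (S : Fin (n + d) → Ω → Bool) (hmeas : ∀ j, Measurable (S j))
    (hind : iIndepFun S μ)
    (hp : ∀ j, μ {ω | S j ω = true} = 1 / 2) :
    iIndepFun (Kseq d n S) μ ∧
      ∀ i : Fin n, μ {ω | Kseq d n S i ω = true} = 1 / 2 :=
  xor_lags_iid_bernoulli_half_general μ d n hd S hmeas hind hp
end

section
/- Let n ≥ 2 and let S₀, S₁, …, S_n be i.i.d. Bool-valued random variables with P(S_j = true) = p ∈ [0,1], and set K_i = S_i ⊕ S_{i−1} for i = 1,…,n. Then the joint entropy satisfies H[(K₁,…,K_n)] ≤ H[K₁] + (n−1)·H[K₂ | K₁], where H[K₂ | K₁] is the conditional entropy of K₂ given K₁. -/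
/-!
Adding the increments one at a time, submodularity of entropy,
`H[W, Z, Y] + H[Z] ≤ H[W, Z] + H[Y, Z]`, bounds the entropy gained by appending `K_{k+1}` to
`(K_1, …, K_k)` by `H[K_{k+1} | K_k]`. Each pair `(K_{k+1}, K_k)` is a function of the window
`(S_{k-1}, S_k, S_{k+1})`, which by independence has the same law as `(S_0, S_1, S_2)`; hence all
these conditional entropies equal `H[K_2 | K_1]`.
-/

open MeasureTheory ProbabilityTheory

/-- Shannon entropy `H[X]` (in nats) of a random variable with finitely many values. -/
noncomputable def ent {Ω α : Type*} [MeasurableSpace Ω] [Fintype α]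
    (μ : MeasureTheory.Measure Ω) (X : Ω → α) : ℝ :=
  ∑ a, Real.negMulLog ((μ (X ⁻¹' {a})).toReal)

/-- Mutual information `I[X : Y]` (in nats) of finitely-valued random variables. -/
noncomputable def mutualInfo {Ω α β : Type*} [MeasurableSpace Ω] [Fintype α] [Fintype β]
    (μ : MeasureTheory.Measure Ω) (X : Ω → α) (Y : Ω → β) : ℝ :=
  ent μ X + ent μ Y - ent μ (fun ω => (X ω, Y ω))

/-- Conditional entropy `H[X | Y]` (in nats) of finitely-valued random variables. -/
noncomputable def condEnt {Ω α β : Type*} [MeasurableSpace Ω] [Fintype α] [Fintype β]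
    (μ : MeasureTheory.Measure Ω) (X : Ω → α) (Y : Ω → β) : ℝ :=
  ent μ (fun ω => (X ω, Y ω)) - ent μ Y

/-- Conditional mutual information `I[X : Y | Z]` (in nats) of finitely-valued random
variables. -/
noncomputable def condMI {Ω α β γ : Type*} [MeasurableSpace Ω] [Fintype α] [Fintype β]
    [Fintype γ] (μ : MeasureTheory.Measure Ω) (X : Ω → α) (Y : Ω → β) (Z : Ω → γ) : ℝ :=
  ent μ (fun ω => (X ω, Z ω)) + ent μ (fun ω => (Y ω, Z ω)) -
    ent μ (fun ω => ((X ω, Y ω), Z ω)) - ent μ Z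

open Real

lemma mul_log_sub_mul_log_le_sub {p q : ℝ} (hp : 0 ≤ p) (hq : 0 ≤ q) (hpq : 0 < p → 0 < q) :
    p * log q - p * log p ≤ q - p := by
  rcases hp.eq_or_lt with rfl | hp
  · simpa using hq
  have hq := hpq hp
  have h := mul_le_mul_of_nonneg_left (log_le_sub_one_of_pos (div_pos hq hp)) hp.le
  rw [log_div hq.ne' hp.ne'] at h
  field_simp at h
  linarith

lemma sum_negMulLog_add_negMulLog_sum_le {α β : Type*} [Fintype α] [Fintype β]
    (r : α → β → ℝ) (hr : ∀ a b, 0 ≤ r a b) :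
    ∑ a, ∑ b, negMulLog (r a b) + negMulLog (∑ a, ∑ b, r a b) ≤
      ∑ a, negMulLog (∑ b, r a b) + ∑ b, negMulLog (∑ a, r a b) := by
  set u : α → ℝ := fun a => ∑ b, r a b
  set v : β → ℝ := fun b => ∑ a, r a b
  set s := ∑ a, u a
  have hu : ∀ a b, r a b ≤ u a := fun a b =>
    Finset.single_le_sum (fun b _ => hr a b) (Finset.mem_univ b)
  have hv : ∀ a b, r a b ≤ v b := fun a b =>
    Finset.single_le_sum (fun a _ => hr a b) (Finset.mem_univ a)
  have hs : ∀ a, u a ≤ s := fun a =>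
    Finset.single_le_sum (fun a _ => Finset.sum_nonneg fun b _ => hr a b) (Finset.mem_univ a)
  have hvs : ∑ b, v b = s := Finset.sum_comm
  -- Gibbs' inequality against the product of the marginals, `q a b = u a * v b / s`.
  have gibbs : ∀ a b, r a b * log (u a) + r a b * log (v b) - r a b * log s - r a b * log (r a b)
      ≤ u a * v b / s - r a b := by
    intro a b
    rcases (hr a b).eq_or_lt with h0 | hpos
    · rw [← h0]
      simp only [zero_mul, sub_zero, add_zero]
      exact div_nonneg (mul_nonneg ((hr a b).trans (hu a b)) ((hr a b).trans (hv a b)))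
        ((hr a b).trans ((hu a b).trans (hs a)))
    have hua := hpos.trans_le (hu a b)
    have hvb := hpos.trans_le (hv a b)
    have hs0 := hua.trans_le (hs a)
    have := mul_log_sub_mul_log_le_sub (q := u a * v b / s) (hr a b) (by positivity)
      fun _ => by positivity
    rwa [log_div (by positivity) hs0.ne', log_mul hua.ne' hvb.ne', mul_sub, mul_add] at this
  have hA : ∑ a, ∑ b, r a b * log (u a) = ∑ a, u a * log (u a) :=
    Finset.sum_congr rfl fun a _ => (Finset.sum_mul _ _ _).symm
  have hB : ∑ a, ∑ b, r a b * log (v b) = ∑ b, v b * log (v b) := by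
    rw [Finset.sum_comm]
    exact Finset.sum_congr rfl fun b _ => (Finset.sum_mul _ _ _).symm
  have hC : ∑ a, ∑ b, r a b * log s = s * log s := by
    simp only [← Finset.sum_mul]
    rfl
  have hD : ∑ a, ∑ b, u a * v b / s = s := by
    simp only [← Finset.sum_div, ← Finset.mul_sum, ← Finset.sum_mul, hvs]
    exact mul_self_div_self s
  have hsum := Finset.sum_le_sum fun a (_ : a ∈ Finset.univ) =>
    Finset.sum_le_sum fun b (_ : b ∈ Finset.univ) => gibbs a b
  simp only [Finset.sum_sub_distrib, Finset.sum_add_distrib, hA, hB, hC, hD] at hsum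
  simp only [negMulLog, neg_mul, Finset.sum_neg_distrib]
  linarith

section Entropy

variable {Ω α β γ : Type*} [MeasurableSpace Ω] [Fintype α] [Fintype β] [Fintype γ]
  {μ : Measure Ω}

lemma ent_comp_of_injective {f : α → β} (hf : f.Injective) (X : Ω → α) :
    ent μ (f ∘ X) = ent μ X := by
  refine (Fintype.sum_of_injective f hf _ _ (fun b hb => ?_) fun a => ?_).symm
  · have : (f ∘ X) ⁻¹' {b} = ∅ :=
      Set.eq_empty_of_forall_notMem fun ω h => hb ⟨X ω, h⟩
    simp [this]
  · rw [Set.preimage_comp, ← Set.image_singleton, hf.preimage_image]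

lemma ent_pair (X : Ω → α) (Y : Ω → β) :
    ent μ (fun ω => (X ω, Y ω)) = ∑ a, ∑ b, negMulLog (μ.real (X ⁻¹' {a} ∩ Y ⁻¹' {b})) := by
  rw [ent, Fintype.sum_prod_type]
  simp only [← Set.singleton_prod_singleton, Set.mk_preimage_prod, measureReal_def]

lemma measureReal_eq_sum_inter_preimage [IsFiniteMeasure μ] [MeasurableSpace β]
    [MeasurableSingletonClass β] {Y : Ω → β} (hY : Measurable Y) (B : Set Ω) :
    μ.real B = ∑ b, μ.real (B ∩ Y ⁻¹' {b}) := by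
  have h := sum_measureReal_preimage_singleton (μ := μ.restrict B) Finset.univ
    fun b _ => hY (measurableSet_singleton b)
  simp only [Finset.coe_univ, Set.preimage_univ, measureReal_restrict_apply_univ] at h
  rw [← h]
  refine Finset.sum_congr rfl fun b _ => ?_
  rw [measureReal_restrict_apply (hY (measurableSet_singleton b)), Set.inter_comm]

lemma ent_triple_add_ent_le [IsFiniteMeasure μ] [MeasurableSpace α] [MeasurableSingletonClass α]
    [MeasurableSpace β] [MeasurableSingletonClass β] {W : Ω → α} {Y : Ω → β} (Z : Ω → γ)
    (hW : Measurable W) (hY : Measurable Y) :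
    ent μ (fun ω => ((W ω, Z ω), Y ω)) + ent μ Z ≤
      ent μ (fun ω => (W ω, Z ω)) + ent μ (fun ω => (Y ω, Z ω)) := by
  set r : γ → α → β → ℝ := fun c a b => μ.real (W ⁻¹' {a} ∩ Z ⁻¹' {c} ∩ Y ⁻¹' {b})
  have hWZ : ∀ a c, μ.real (W ⁻¹' {a} ∩ Z ⁻¹' {c}) = ∑ b, r c a b := fun a c =>
    measureReal_eq_sum_inter_preimage hY _
  have hYZ : ∀ b c, μ.real (Y ⁻¹' {b} ∩ Z ⁻¹' {c}) = ∑ a, r c a b := by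
    intro b c
    rw [measureReal_eq_sum_inter_preimage hW]
    refine Finset.sum_congr rfl fun a _ => ?_
    simp only [r, Set.inter_comm, Set.inter_left_comm]
  have hZ : ∀ c, μ.real (Z ⁻¹' {c}) = ∑ a, ∑ b, r c a b := by
    intro c
    rw [measureReal_eq_sum_inter_preimage hW]
    simp only [Set.inter_comm (Z ⁻¹' {c}), hWZ]
  have eWZY : ent μ (fun ω => ((W ω, Z ω), Y ω)) = ∑ c, ∑ a, ∑ b, negMulLog (r c a b) := by
    rw [ent_pair, Fintype.sum_prod_type_right]
    simp only [r, ← Set.singleton_prod_singleton, Set.mk_preimage_prod]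
  have eZ : ent μ Z = ∑ c, negMulLog (∑ a, ∑ b, r c a b) := by
    simp only [ent, ← measureReal_def, hZ]
  have eWZ : ent μ (fun ω => (W ω, Z ω)) = ∑ c, ∑ a, negMulLog (∑ b, r c a b) := by
    rw [ent_pair, Finset.sum_comm]
    simp only [hWZ]
  have eYZ : ent μ (fun ω => (Y ω, Z ω)) = ∑ c, ∑ b, negMulLog (∑ a, r c a b) := by
    rw [ent_pair, Finset.sum_comm]
    simp only [hYZ]
  rw [eWZY, eZ, eWZ, eYZ, ← Finset.sum_add_distrib, ← Finset.sum_add_distrib]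
  exact Finset.sum_le_sum fun c _ =>
    sum_negMulLog_add_negMulLog_sum_le (r c) fun a b => measureReal_nonneg

lemma ProbabilityTheory.IdentDistrib.ent_eq [MeasurableSpace α] [MeasurableSingletonClass α]
    {Ω' : Type*} [MeasurableSpace Ω'] {ν : Measure Ω'} {X : Ω → α} {Y : Ω' → α}
    (h : IdentDistrib X Y μ ν) : ent μ X = ent ν Y :=
  Finset.sum_congr rfl fun a _ => by rw [h.measure_mem_eq (measurableSet_singleton a)]

lemma ProbabilityTheory.IdentDistrib.condEnt_eq [MeasurableSpace α] [MeasurableSingletonClass α]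
    [MeasurableSpace β] [MeasurableSingletonClass β] {Ω' : Type*} [MeasurableSpace Ω']
    {ν : Measure Ω'} {X : Ω → α} {Y : Ω → β} {X' : Ω' → α} {Y' : Ω' → β}
    (h : IdentDistrib (fun ω => (X ω, Y ω)) (fun ω => (X' ω, Y' ω)) μ ν) :
    condEnt μ X Y = condEnt ν X' Y' := by
  rw [condEnt, condEnt, h.ent_eq]
  congr 1
  exact (h.comp measurable_snd).ent_eq

end Entropy

lemma Fin.snoc_uncurry_injective {α : Type*} {k : ℕ} :
    Function.Injective fun p : (Fin k → α) × α => (Fin.snoc p.1 p.2 : Fin (k + 1) → α) :=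
  fun _ _ h => Prod.ext (Fin.snoc_injective2 h).1 (Fin.snoc_injective2 h).2

lemma Fin.snoc_restrict_succ {α : Type*} (X : ℕ → α) (k : ℕ) :
    (Fin.snoc (fun i : Fin k => X i) (X k) : Fin (k + 1) → α) = fun i : Fin (k + 1) => X i := by
  funext i
  refine Fin.lastCases ?_ (fun j => ?_) i <;> simp

section Stationary

variable {Ω α : Type*} [MeasurableSpace Ω] [Fintype α] [MeasurableSpace α]
  [MeasurableSingletonClass α] {μ : Measure Ω} [IsFiniteMeasure μ]
  {X : ℕ → Ω → α}

lemma ent_fin_succ_succ_le (hX : ∀ i, Measurable (X i)) (m : ℕ) :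
    ent μ (fun ω (i : Fin (m + 2)) => X i ω) ≤
      ent μ (fun ω (i : Fin (m + 1)) => X i ω) + condEnt μ (X (m + 1)) (X m) := by
  set W : Ω → Fin m → α := fun ω i => X i ω
  have hW : Measurable W := measurable_pi_lambda _ fun i => hX i
  have e1 : ent μ (fun ω (i : Fin (m + 1)) => X i ω) = ent μ (fun ω => (W ω, X m ω)) := by
    rw [← ent_comp_of_injective Fin.snoc_uncurry_injective]
    congr 1
    funext ω
    exact (Fin.snoc_restrict_succ (X · ω) m).symm
  have e2 : ent μ (fun ω (i : Fin (m + 2)) => X i ω) =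
      ent μ (fun ω => ((W ω, X m ω), X (m + 1) ω)) := by
    rw [← ent_comp_of_injective
      (Fin.snoc_uncurry_injective.comp (Fin.snoc_uncurry_injective.prodMap Function.injective_id))]
    congr 1
    funext ω
    simp only [Function.comp_apply, Prod.map, id, W]
    rw [Fin.snoc_restrict_succ (X · ω) m, Fin.snoc_restrict_succ (X · ω) (m + 1)]
  have := ent_triple_add_ent_le (μ := μ) (X m) hW (hX (m + 1))
  rw [condEnt, e1, e2]
  linarith

theorem ent_fin_succ_le_of_identDistrib (hX : ∀ i, Measurable (X i)) (m : ℕ)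
    (hstat : ∀ k < m,
      IdentDistrib (fun ω => (X (k + 1) ω, X k ω)) (fun ω => (X 1 ω, X 0 ω)) μ μ) :
    ent μ (fun ω (i : Fin (m + 1)) => X i ω) ≤ ent μ (X 0) + m * condEnt μ (X 1) (X 0) := by
  induction m with
  | zero =>
    have hconst : (fun ω (i : Fin 1) => X i ω) = (fun a (_ : Fin 1) => a) ∘ X 0 := by
      funext ω i
      rw [Fin.fin_one_eq_zero i]
      rfl
    rw [hconst, ent_comp_of_injective fun a b h => congrFun h 0]
    simp
  | succ m ih =>
    calc ent μ (fun ω (i : Fin (m + 2)) => X i ω)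
        ≤ ent μ (fun ω (i : Fin (m + 1)) => X i ω) + condEnt μ (X 1) (X 0) := by
          rw [← (hstat m m.lt_add_one).condEnt_eq]
          exact ent_fin_succ_succ_le hX m
      _ ≤ ent μ (X 0) + m * condEnt μ (X 1) (X 0) + condEnt μ (X 1) (X 0) := by
          gcongr
          exact ih fun k hk => hstat k (hk.trans m.lt_add_one)
      _ = ent μ (X 0) + ↑(m + 1) * condEnt μ (X 1) (X 0) := by
          push_cast
          ring

end Stationary

lemma identDistrib_of_measure_eq_true {Ω Ω' : Type*} [MeasurableSpace Ω] [MeasurableSpace Ω']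
    {μ : Measure Ω} {ν : Measure Ω'} [IsProbabilityMeasure μ] [IsProbabilityMeasure ν]
    {X : Ω → Bool} {Y : Ω' → Bool} (hX : Measurable X) (hY : Measurable Y)
    (h : μ {ω | X ω = true} = ν {ω | Y ω = true}) : IdentDistrib X Y μ ν where
  aemeasurable_fst := hX.aemeasurable
  aemeasurable_snd := hY.aemeasurable
  map_eq := by
    refine Measure.ext_iff_singleton.2 fun b => ?_
    rw [Measure.map_apply hX (measurableSet_singleton b),
      Measure.map_apply hY (measurableSet_singleton b)]
    cases b
    · have hX' : X ⁻¹' {false} = (X ⁻¹' {true})ᶜ := by ext; simp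
      have hY' : Y ⁻¹' {false} = (Y ⁻¹' {true})ᶜ := by ext; simp
      rw [hX', hY', prob_compl_eq_one_sub (hX (measurableSet_singleton true)),
        prob_compl_eq_one_sub (hY (measurableSet_singleton true))]
      exact congrArg (1 - ·) h
    · exact h

section Increments

variable {Ω : Type*} {N : ℕ} {S : Fin (N + 1) → Ω → Bool}

/-- The index is read modulo `N + 1`; only `i < N` is meaningful. -/
def increment (S : Fin (N + 1) → Ω → Bool) (i : ℕ) (ω : Ω) : Bool :=
  xor (S (Fin.ofNat _ (i + 1)) ω) (S (Fin.ofNat _ i) ω)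

lemma increment_val (i : Fin N) (ω : Ω) :
    increment S i ω = xor (S i.succ ω) (S i.castSucc ω) := by
  have h1 : Fin.ofNat (N + 1) (i + 1) = i.succ := by
    ext
    rw [Fin.val_ofNat, Nat.mod_eq_of_lt (Nat.succ_lt_succ i.isLt), Fin.val_succ]
  have h0 : Fin.ofNat (N + 1) i = i.castSucc := by
    ext
    rw [Fin.val_ofNat, Nat.mod_eq_of_lt (i.isLt.trans N.lt_add_one), Fin.val_castSucc]
  rw [increment, h1, h0]

variable [MeasurableSpace Ω] {μ : Measure Ω}

lemma measurable_increment (hS : ∀ j, Measurable (S j)) (i : ℕ) : Measurable (increment S i) :=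
  (measurable_of_countable fun b : Bool × Bool => xor b.1 b.2).comp ((hS _).prodMk (hS _))

lemma identDistrib_increment_pair (hind : iIndepFun S μ)
    (hS : ∀ i j, IdentDistrib (S i) (S j) μ μ) {k : ℕ} (hk : k + 2 ≤ N) :
    IdentDistrib (fun ω => (increment S (k + 1) ω, increment S k ω))
      (fun ω => (increment S 1 ω, increment S 0 ω)) μ μ := by
  set window : ℕ → Fin 3 → Fin (N + 1) := fun l i => Fin.ofNat _ (l + i)
  have hwindow : ∀ l, l + 2 ≤ N → (window l).Injective := by
    intro l hl i j hij
    have := congrArg Fin.val hij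
    simp only [window, Fin.val_ofNat] at this
    rw [Nat.mod_eq_of_lt (by omega), Nat.mod_eq_of_lt (by omega)] at this
    exact Fin.ext (by omega)
  exact (IdentDistrib.pi (fun i => hS (window k i) (window 0 i))
      (hind.precomp (hwindow k hk)) (hind.precomp (hwindow 0 (by omega)))).comp
    (u := fun x : Fin 3 → Bool => (xor (x 2) (x 1), xor (x 1) (x 0))) (measurable_of_countable _)

end Increments

/-- For `n ≥ 2` and `S₀, …, S_n` i.i.d. Bernoulli(`p`), the increments
`K_i = S_i ⊕ S_{i−1}` satisfy `H[(K₁,…,K_n)] ≤ H[K₁] + (n−1)·H[K₂ | K₁]`. -/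
theorem joint_entropy_of_increments_le {Ω : Type*} [MeasurableSpace Ω]
    (μ : Measure Ω) [IsProbabilityMeasure μ]
    (n : ℕ) (hn : 2 ≤ n)
    (S : Fin (n + 1) → Ω → Bool) (hmeas : ∀ j, Measurable (S j))
    (hind : iIndepFun S μ)
    (p : ℝ)
    (hiid : ∀ j, μ {ω | S j ω = true} = ENNReal.ofReal p) :
    ent μ (fun ω => fun i : Fin n => xor (S i.succ ω) (S i.castSucc ω)) ≤
      ent μ (fun ω => xor (S (⟨0, by omega⟩ : Fin n).succ ω) (S (⟨0, by omega⟩ : Fin n).castSucc ω)) +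
        ((n : ℝ) - 1) *
          condEnt μ
            (fun ω => xor (S (⟨1, by omega⟩ : Fin n).succ ω) (S (⟨1, by omega⟩ : Fin n).castSucc ω))
            (fun ω => xor (S (⟨0, by omega⟩ : Fin n).succ ω) (S (⟨0, by omega⟩ : Fin n).castSucc ω)) := by
  have hS : ∀ i j, IdentDistrib (S i) (S j) μ μ := fun i j =>
    identDistrib_of_measure_eq_true (hmeas i) (hmeas j) ((hiid i).trans (hiid j).symm)
  obtain ⟨m, rfl⟩ : ∃ m, n = m + 1 := ⟨n - 1, by omega⟩
  simp only [← increment_val, Nat.cast_add, Nat.cast_one, add_sub_cancel_right]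
  exact ent_fin_succ_le_of_identDistrib (measurable_increment hmeas) m
    fun k hk => identDistrib_increment_pair hind hS (by omega)
end
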